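/- For every θ ∈ ℝ^d and every coordinate i ∈ {1,…,d}, the partial derivative of the hard-negative NCE loss satisfies ∂J_HARD/∂θ_i(θ) = − Σ_{(x,y_1)} pop(x,y_1)·∂s_θ(x,y_1)/∂θ_i + Σ_{x∈X} pop(x) · Σ_{y∈Y} γ_θ(y|x)·∂s_θ(x,y)/∂θ_i. -/

import Mathlib

/-!
Since `-log π_θ(1|x,y_{1:K}) = log Σ_k exp s_θ(x,y_k) - s_θ(x,y_1)`, its gradient is
`Σ_k π_θ(k|x,y_{1:K}) ∇s_θ(x,y_k) - ∇s_θ(x,y_1)`. Averaging over `pop` and `h`, the second term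
gives the gold-score term, and regrouping the first term by the candidate value `y = y_k` gives
`γ_θ(y|x)`, the factor `pop(x)` undoing the conditioning in `pop(y_1|x)`.
-/

open Finset

noncomputable section

/-- Model distribution `p_θ(y|x) = exp(s_θ(x,y)) / Σ_{y'} exp(s_θ(x,y'))`. -/
def model {X Y : Type*} [Fintype Y] {d : ℕ} (s : (Fin d → ℝ) → X → Y → ℝ)
    (θ : Fin d → ℝ) (x : X) (y : Y) : ℝ :=
  Real.exp (s θ x y) / ∑ y' : Y, Real.exp (s θ x y')

/-- NCE discriminator `π_θ(k|x, y_{1:K})`. -/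
def nceProb {X Y : Type*} {d K : ℕ} (s : (Fin d → ℝ) → X → Y → ℝ)
    (θ : Fin d → ℝ) (x : X) (ys : Fin K → Y) (k : Fin K) : ℝ :=
  Real.exp (s θ x (ys k)) / ∑ k' : Fin K, Real.exp (s θ x (ys k'))

/-- Marginal `pop(x) = Σ_y pop(x,y)`. -/
def popX {X Y : Type*} [Fintype Y] (pop : X × Y → ℝ) (x : X) : ℝ :=
  ∑ y : Y, pop (x, y)

/-- Conditional `pop(y|x) = pop(x,y) / pop(x)`. -/
def popCond {X Y : Type*} [Fintype Y] (pop : X × Y → ℝ) (x : X) (y : Y) : ℝ :=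
  pop (x, y) / popX pop x

/-- Cross-entropy loss `J_CE(θ) = Σ_{(x,y)} pop(x,y) · (−log p_θ(y|x))`. -/
def JCE {X Y : Type*} [Fintype X] [Fintype Y] {d : ℕ}
    (s : (Fin d → ℝ) → X → Y → ℝ) (pop : X × Y → ℝ) (θ : Fin d → ℝ) : ℝ :=
  ∑ x : X, ∑ y : Y, pop (x, y) * (-Real.log (model s θ x y))

/-- Hard-negative NCE loss with `K = m + 1` candidates: the gold `y₁` plus `m` negatives
`y_{2:K}` drawn from `h(·|x,y₁)`. -/
def JHARD {X Y : Type*} [Fintype X] [Fintype Y] {d m : ℕ}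
    (s : (Fin d → ℝ) → X → Y → ℝ) (pop : X × Y → ℝ)
    (h : X → Y → (Fin m → Y) → ℝ) (θ : Fin d → ℝ) : ℝ :=
  ∑ x : X, ∑ y1 : Y, pop (x, y1) *
    ∑ yn : Fin m → Y, h x y1 yn * (-Real.log (nceProb s θ x (Fin.cons y1 yn) 0))

/-- Selection probability `γ_θ(y|x)`: the probability that `y` is included as a candidate
(either as the gold or a negative) and then selected by the NCE discriminator. -/
def gam {X Y : Type*} [Fintype Y] [DecidableEq Y] {d m : ℕ}
    (s : (Fin d → ℝ) → X → Y → ℝ) (pop : X × Y → ℝ)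
    (h : X → Y → (Fin m → Y) → ℝ) (θ : Fin d → ℝ) (x : X) (y : Y) : ℝ :=
  ∑ y1 : Y, popCond pop x y1 *
    ∑ yn : Fin m → Y, h x y1 yn *
      ∑ k : Fin (m + 1),
        (if (Fin.cons y1 yn : Fin (m + 1) → Y) k = y then (1 : ℝ) else 0) * nceProb s θ x (Fin.cons y1 yn) k

lemma hasFDerivAt_neg_log_nceProb {X Y : Type*} {d K : ℕ} (s : (Fin d → ℝ) → X → Y → ℝ)
    (hs : ∀ x y, Differentiable ℝ fun θ => s θ x y) (θ : Fin d → ℝ) (x : X)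
    (ys : Fin K → Y) (j : Fin K) :
    HasFDerivAt (fun θ' => -Real.log (nceProb s θ' x ys j))
      ((∑ k, nceProb s θ x ys k • fderiv ℝ (fun θ' => s θ' x (ys k)) θ)
        - fderiv ℝ (fun θ' => s θ' x (ys j)) θ) θ := by
  have hZ_pos : ∀ θ', 0 < ∑ k, Real.exp (s θ' x (ys k)) := fun θ' =>
    sum_pos (fun _ _ => Real.exp_pos _) ⟨j, mem_univ j⟩
  have h_eq : (fun θ' => -Real.log (nceProb s θ' x ys j)) =
      fun θ' => Real.log (∑ k, Real.exp (s θ' x (ys k))) - s θ' x (ys j) := by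
    funext θ'
    rw [nceProb, Real.log_div (Real.exp_pos _).ne' (hZ_pos θ').ne', Real.log_exp]
    ring
  have hZ : HasFDerivAt (fun θ' => ∑ k, Real.exp (s θ' x (ys k)))
      (∑ k, Real.exp (s θ x (ys k)) • fderiv ℝ (fun θ' => s θ' x (ys k)) θ) θ :=
    HasFDerivAt.fun_sum fun k _ => ((hs x (ys k)).differentiableAt.hasFDerivAt).exp
  rw [h_eq]
  refine ((hZ.log (hZ_pos θ).ne').sub (hs x (ys j)).differentiableAt.hasFDerivAt).congr_fderiv ?_
  rw [smul_sum]
  congr 1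
  refine sum_congr rfl fun k _ => ?_
  rw [smul_smul, nceProb, div_eq_inv_mul]

lemma hasFDerivAt_JHARD {X Y : Type*} [Fintype X] [Fintype Y] {d m : ℕ}
    (s : (Fin d → ℝ) → X → Y → ℝ) (hs : ∀ x y, Differentiable ℝ fun θ => s θ x y)
    (pop : X × Y → ℝ) (h : X → Y → (Fin m → Y) → ℝ) (θ : Fin d → ℝ) :
    HasFDerivAt (JHARD s pop h)
      (∑ x, ∑ y1, pop (x, y1) • ∑ yn, h x y1 yn •
        ((∑ k, nceProb s θ x (Fin.cons y1 yn) k •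
            fderiv ℝ (fun θ' => s θ' x ((Fin.cons y1 yn : Fin (m + 1) → Y) k)) θ)
          - fderiv ℝ (fun θ' => s θ' x y1) θ)) θ :=
  HasFDerivAt.fun_sum fun x _ => HasFDerivAt.fun_sum fun y1 _ =>
    (HasFDerivAt.fun_sum fun yn _ =>
      (hasFDerivAt_neg_log_nceProb s hs θ x (Fin.cons y1 yn) 0).const_mul (h x y1 yn)).const_mul
      (pop (x, y1))

lemma sum_sum_ite_eq_mul {ι Y : Type*} [Fintype ι] [Fintype Y] [DecidableEq Y]
    (g : ι → Y) (w : ι → ℝ) (a : Y → ℝ) :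
    ∑ y, (∑ k, (if g k = y then (1 : ℝ) else 0) * w k) * a y = ∑ k, w k * a (g k) := by
  simp only [sum_mul, ite_mul, one_mul, zero_mul]
  rw [sum_comm]
  exact sum_congr rfl fun k _ => by simp only [sum_ite_eq, mem_univ, if_true]

lemma sum_gam_mul {X Y : Type*} [Fintype Y] [DecidableEq Y] {d m : ℕ}
    (s : (Fin d → ℝ) → X → Y → ℝ) (pop : X × Y → ℝ) (h : X → Y → (Fin m → Y) → ℝ)
    (θ : Fin d → ℝ) (x : X) (a : Y → ℝ) :
    ∑ y, gam s pop h θ x y * a y =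
      ∑ y1, popCond pop x y1 * ∑ yn, h x y1 yn *
        ∑ k, nceProb s θ x (Fin.cons y1 yn) k * a ((Fin.cons y1 yn : Fin (m + 1) → Y) k) := by
  simp only [gam, sum_mul]
  rw [sum_comm]
  refine sum_congr rfl fun y1 _ => ?_
  simp only [mul_assoc, ← mul_sum]
  congr 1
  simp only [sum_mul]
  rw [sum_comm]
  refine sum_congr rfl fun yn _ => ?_
  simp only [mul_assoc, ← mul_sum]
  rw [sum_sum_ite_eq_mul]

lemma popX_mul_popCond {X Y : Type*} [Fintype Y] {pop : X × Y → ℝ} (hpop : ∀ p, 0 ≤ pop p)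
    (x : X) (y : Y) : popX pop x * popCond pop x y = pop (x, y) := by
  rcases eq_or_ne (popX pop x) 0 with hx | hx
  · rw [hx, zero_mul, eq_comm]
    exact (sum_eq_zero_iff_of_nonneg fun y _ => hpop (x, y)).mp hx y (mem_univ y)
  · rw [popCond, mul_div_cancel₀ _ hx]

theorem grad_JHARD_general {X Y : Type*} [Fintype X] [Fintype Y]
    [DecidableEq Y] {d m : ℕ}
    (s : (Fin d → ℝ) → X → Y → ℝ)
    (hs : ∀ x y, Differentiable ℝ fun θ => s θ x y)
    (pop : X × Y → ℝ) (hpop : ∀ p, 0 ≤ pop p)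
    (h : X → Y → (Fin m → Y) → ℝ)
    (hh1 : ∀ x y1, ∑ yn : Fin m → Y, h x y1 yn = 1)
    (θ : Fin d → ℝ) :
    ∀ i : Fin d,
      fderiv ℝ (JHARD s pop h) θ (Pi.single i 1) =
        -(∑ x : X, ∑ y1 : Y, pop (x, y1) *
            fderiv ℝ (fun θ' => s θ' x y1) θ (Pi.single i 1))
          + ∑ x : X, popX pop x * ∑ y : Y,
              gam s pop h θ x y * fderiv ℝ (fun θ' => s θ' x y) θ (Pi.single i 1) := by
  intro i
  rw [(hasFDerivAt_JHARD s hs pop h θ).fderiv]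
  simp only [_root_.sum_apply, smul_apply, sub_apply, smul_eq_mul]
  rw [← sum_neg_distrib, ← sum_add_distrib]
  refine sum_congr rfl fun x _ => ?_
  rw [sum_gam_mul, mul_sum, ← sum_neg_distrib, ← sum_add_distrib]
  refine sum_congr rfl fun y1 _ => ?_
  rw [← mul_assoc, popX_mul_popCond hpop]
  simp only [mul_sub, sum_sub_distrib, ← sum_mul, hh1]
  ring

/-- **gradient of the hard-negative NCE loss.**
`∂J_HARD/∂θ_i(θ) = − Σ_{(x,y₁)} pop(x,y₁)·∂s_θ(x,y₁)/∂θ_i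
                 + Σ_x pop(x) · Σ_y γ_θ(y|x)·∂s_θ(x,y)/∂θ_i`. -/
theorem grad_JHARD {X Y : Type*} [Fintype X] [Fintype Y] [Nonempty X] [Nonempty Y]
    [DecidableEq Y] {d m : ℕ} (hd : 1 ≤ d) (hm : 1 ≤ m)
    (s : (Fin d → ℝ) → X → Y → ℝ)
    (hs : ∀ x y, Differentiable ℝ fun θ => s θ x y)
    (pop : X × Y → ℝ) (hpop : ∀ p, 0 ≤ pop p) (hpop1 : ∑ p : X × Y, pop p = 1)
    (h : X → Y → (Fin m → Y) → ℝ)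
    (hh : ∀ x y1 yn, 0 ≤ h x y1 yn)
    (hh1 : ∀ x y1, ∑ yn : Fin m → Y, h x y1 yn = 1)
    (θ : Fin d → ℝ) :
    ∀ i : Fin d,
      fderiv ℝ (JHARD s pop h) θ (Pi.single i 1) =
        -(∑ x : X, ∑ y1 : Y, pop (x, y1) *
            fderiv ℝ (fun θ' => s θ' x y1) θ (Pi.single i 1))
          + ∑ x : X, popX pop x * ∑ y : Y,
              gam s pop h θ x y * fderiv ℝ (fun θ' => s θ' x y) θ (Pi.single i 1) :=
  grad_JHARD_general s hs pop hpop h hh1 θ
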